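/- arXiv:2112.15116 — 2 statements merged into one kernel-verified Lean document; each statement's English description precedes it below -/
import Mathlib

section
/- For every quaternion q and every k ≥ 1, the Appell polynomial Q_k(q,q̄) = Σ_{j=0}^k (2(k-j+1)/((k+1)(k+2))) q^{k-j} q̄^j satisfies (1/2)·D̄ Q_k(q,q̄) = k·Q_{k-1}(q,q̄), where D̄ = ∂_{x_0} − i∂_{x_1} − j∂_{x_2} − k∂_{x_3} is the conjugate Cauchy–Fueter operator. -/
open Quaternion Real MeasureTheory

noncomputable section

/-- The quaternion imaginary unit `i`. -/
def qi : ℍ[ℝ] := ⟨0,1,0,0⟩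
/-- The quaternion imaginary unit `j`. -/
def qj : ℍ[ℝ] := ⟨0,0,1,0⟩
/-- The quaternion imaginary unit `k`. -/
def qk : ℍ[ℝ] := ⟨0,0,0,1⟩

/-- Directional (partial) derivative of `f : ℍ → ℍ` at `q` in direction `v`. -/
def pd (v : ℍ[ℝ]) (f : ℍ[ℝ] → ℍ[ℝ]) (q : ℍ[ℝ]) : ℍ[ℝ] := fderiv ℝ f q v

/-- The Cauchy–Fueter operator `D = ∂_{x₀} + i∂_{x₁} + j∂_{x₂} + k∂_{x₃}`. -/
def Dop (f : ℍ[ℝ] → ℍ[ℝ]) (q : ℍ[ℝ]) : ℍ[ℝ] :=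
  pd 1 f q + qi * pd qi f q + qj * pd qj f q + qk * pd qk f q

/-- The conjugate Cauchy–Fueter operator `D̄ = ∂_{x₀} - i∂_{x₁} - j∂_{x₂} - k∂_{x₃}`. -/
def Dbar (f : ℍ[ℝ] → ℍ[ℝ]) (q : ℍ[ℝ]) : ℍ[ℝ] :=
  pd 1 f q - qi * pd qi f q - qj * pd qj f q - qk * pd qk f q

/-- The 4-dimensional Laplacian `Δ = ∂²_{x₀} + ∂²_{x₁} + ∂²_{x₂} + ∂²_{x₃}`. -/
def qlap (f : ℍ[ℝ] → ℍ[ℝ]) (q : ℍ[ℝ]) : ℍ[ℝ] :=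
  pd 1 (pd 1 f) q + pd qi (pd qi f) q + pd qj (pd qj f) q + pd qk (pd qk f) q

/-- The quaternionic Appell polynomials
`Q_k(q,q̄) = Σ_{j=0}^k (2(k-j+1)/((k+1)(k+2))) q^{k-j} q̄^j`. -/
def Qa (k : ℕ) (q : ℍ[ℝ]) : ℍ[ℝ] :=
  ∑ j ∈ Finset.range (k+1),
    ((2*((k:ℝ)-j+1))/(((k:ℝ)+1)*((k:ℝ)+2))) • (q^(k-j) * (star q)^j)

/-- The generalized Appell polyanalytic polynomials `M_{k,s}(q,q̄) = x₀^k Q_s(q,q̄)`,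
where `x₀ = Re q`. -/
def Ma (k s : ℕ) (q : ℍ[ℝ]) : ℍ[ℝ] := q.re ^ k • Qa s q

/-!
Write `D̄ = ∑ₑ ē ∂ₑ` over `e ∈ {1, i, j, k}`. The directional derivative of a monomial
`q^m q̄^j` is a sum of terms `a e b` and `a ē b`, and the identities `∑ₑ ē a e = 2(a + ā)`,
`∑ₑ ē a ē = -2ā` turn `½ D̄ (q^m q̄^j)` into
`m q^(m-1) q̄^j + ∑_{i<m} q^i q̄^(m+j-1-i) - ∑_{i<j} q^i q̄^(m+j-1-i)`.
Indexing `Q_k` by the power `m` of `q`, its weights are proportional to `m + 1`; collecting the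
coefficient of `q^i q̄^(k-1-i)` in `½ D̄ Q_k` gives `(k + 2)(i + 1)` up to that factor, by
Gauss sums, and this is `k` times the weight of the same monomial in `Q_(k-1)`.
-/

open Finset

instance : StarModule ℝ ℍ[ℝ] := ⟨fun r x => by ext <;> simp⟩

-- `∑ₑ ē F(e)` over the basis `e ∈ {1, i, j, k}`.
def conjBasisSum (F : ℍ[ℝ] → ℍ[ℝ]) : ℍ[ℝ] := F 1 - qi * F qi - qj * F qj - qk * F qk

lemma Dbar_eq_conjBasisSum (f : ℍ[ℝ] → ℍ[ℝ]) (q : ℍ[ℝ]) :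
    Dbar f q = conjBasisSum (fun v => pd v f q) := rfl

lemma conjBasisSum_add (F G : ℍ[ℝ] → ℍ[ℝ]) :
    conjBasisSum (fun v => F v + G v) = conjBasisSum F + conjBasisSum G := by
  simp only [conjBasisSum, mul_add]; abel

lemma conjBasisSum_sum {ι : Type*} (s : Finset ι) (F : ι → ℍ[ℝ] → ℍ[ℝ]) :
    conjBasisSum (fun v => ∑ i ∈ s, F i v) = ∑ i ∈ s, conjBasisSum (F i) := by
  simp only [conjBasisSum, mul_sum, sum_sub_distrib]

lemma conjBasisSum_mul_mul (a b : ℍ[ℝ]) :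
    conjBasisSum (fun v => a * v * b) = (2 : ℝ) • ((a + star a) * b) := by
  ext <;> simp only [conjBasisSum, Quaternion.re_mul, Quaternion.imI_mul, Quaternion.imJ_mul,
    Quaternion.imK_mul, Quaternion.re_sub, Quaternion.imI_sub, Quaternion.imJ_sub,
    Quaternion.imK_sub] <;> simp [qi, qj, qk] <;> ring

lemma conjBasisSum_mul_star_mul (a b : ℍ[ℝ]) :
    conjBasisSum (fun v => a * star v * b) = -((2 : ℝ) • (star a * b)) := by
  ext <;> simp only [conjBasisSum, Quaternion.re_mul, Quaternion.imI_mul, Quaternion.imJ_mul,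
    Quaternion.imK_mul, Quaternion.re_sub, Quaternion.imI_sub, Quaternion.imJ_sub,
    Quaternion.imK_sub, Quaternion.re_star, Quaternion.imI_star, Quaternion.imJ_star,
    Quaternion.imK_star] <;> simp [qi, qj, qk] <;> ring

lemma Dbar_sum_smul {ι : Type*} (s : Finset ι) (c : ι → ℝ) (F : ι → ℍ[ℝ] → ℍ[ℝ]) (q : ℍ[ℝ])
    (hF : ∀ i ∈ s, DifferentiableAt ℝ (F i) q) :
    Dbar (fun x => ∑ i ∈ s, c i • F i x) q = ∑ i ∈ s, c i • Dbar (F i) q := by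
  have hderiv : fderiv ℝ (fun x => ∑ i ∈ s, c i • F i x) q = ∑ i ∈ s, c i • fderiv ℝ (F i) q :=
    (HasFDerivAt.fun_sum fun i hi => (hF i hi).hasFDerivAt.const_smul (c i)).fderiv
  simp only [Dbar, pd, hderiv, _root_.sum_apply, smul_apply, mul_sum, mul_smul_comm,
    ← sum_sub_distrib, smul_sub]

lemma pd_pow (m : ℕ) (v q : ℍ[ℝ]) :
    pd v (fun x => x ^ m) q = ∑ i ∈ range m, q ^ (m - 1 - i) * v * q ^ i := by
  simp [pd, fderiv_pow_ring', Nat.pred_eq_sub_one, mul_assoc]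

lemma pd_star_pow (m : ℕ) (v q : ℍ[ℝ]) :
    pd v (fun x => star x ^ m) q = ∑ i ∈ range m, star q ^ i * star v * star q ^ (m - 1 - i) := by
  have h := ((hasFDerivAt_pow' (𝕜 := ℝ) m (x := q)).star).fderiv
  simp only [← star_pow] at h ⊢
  rw [pd, h]
  simp [mul_assoc]

lemma pd_pow_mul_star_pow (m j : ℕ) (v q : ℍ[ℝ]) :
    pd v (fun x => x ^ m * star x ^ j) q =
      ∑ i ∈ range m, q ^ (m - 1 - i) * v * (q ^ i * star q ^ j) +
        ∑ i ∈ range j, q ^ m * star q ^ i * star v * star q ^ (j - 1 - i) := by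
  have hstar : DifferentiableAt ℝ (fun x : ℍ[ℝ] => star x ^ j) q := by fun_prop
  rw [pd, fderiv_fun_mul' (differentiableAt_pow m) hstar]
  simp only [MulOpposite.op_pow, MulOpposite.op_star, add_apply, smul_apply, smul_eq_mul,
    MulOpposite.smul_eq_mul_unop, MulOpposite.unop_pow, MulOpposite.unop_star, MulOpposite.unop_op]
  rw [← pd, ← pd, pd_pow, pd_star_pow, add_comm, sum_mul, mul_sum]
  simp only [mul_assoc]

lemma half_smul_Dbar_pow_mul_star_pow (m j : ℕ) (q : ℍ[ℝ]) :
    (1 / 2 : ℝ) • Dbar (fun x => x ^ m * star x ^ j) q =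
      (m : ℝ) • (q ^ (m - 1) * star q ^ j) + ∑ i ∈ range m, q ^ i * star q ^ (m + j - 1 - i) -
        ∑ i ∈ range j, q ^ i * star q ^ (m + j - 1 - i) := by
  have hcomm : Commute (star q) q := star_comm_self
  have hfirst : ∀ i ∈ range m, (1 / 2 : ℝ) • ((2 : ℝ) • ((q ^ (m - 1 - i) + star (q ^ (m - 1 - i)))
      * (q ^ i * star q ^ j))) = q ^ (m - 1) * star q ^ j + q ^ i * star q ^ (m + j - 1 - i) := by
    intro i hi
    have hi : i < m := mem_range.mp hi
    have hq : q ^ (m - 1 - i) * (q ^ i * star q ^ j) = q ^ (m - 1) * star q ^ j := by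
      rw [← mul_assoc, ← pow_add, Nat.sub_add_cancel (by omega)]
    have hstar : star q ^ (m - 1 - i) * (q ^ i * star q ^ j) = q ^ i * star q ^ (m + j - 1 - i) := by
      rw [← mul_assoc, (hcomm.pow_pow _ _).eq, mul_assoc, ← pow_add]
      congr 2; omega
    rw [smul_smul, one_div, inv_mul_cancel₀ two_ne_zero, one_smul, add_mul, star_pow, hq, hstar]
  have hsecond : ∀ i ∈ range j, (1 / 2 : ℝ) • -((2 : ℝ) • (star (q ^ m * star q ^ i) *
      star q ^ (j - 1 - i))) = -(q ^ i * star q ^ (m + j - 1 - i)) := by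
    intro i hi
    have hi : i < j := mem_range.mp hi
    rw [smul_neg, smul_smul, one_div, inv_mul_cancel₀ two_ne_zero, one_smul, star_mul,
      star_pow (star q), star_star, star_pow, mul_assoc, ← pow_add]
    congr 3; omega
  rw [Dbar_eq_conjBasisSum]
  simp only [pd_pow_mul_star_pow, conjBasisSum_add, conjBasisSum_sum, conjBasisSum_mul_mul,
    conjBasisSum_mul_star_mul]
  rw [smul_add, smul_sum, smul_sum, sum_congr rfl hfirst, sum_congr rfl hsecond, sum_add_distrib,
    sum_const, card_range, sum_neg_distrib, ← Nat.cast_smul_eq_nsmul ℝ, sub_eq_add_neg]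

lemma Qa_eq_sum_pow_mul_star_pow (k : ℕ) (q : ℍ[ℝ]) :
    Qa k q = ∑ m ∈ range (k + 1),
      (2 * ((m : ℝ) + 1) / (((k : ℝ) + 1) * ((k : ℝ) + 2))) • (q ^ m * star q ^ (k - m)) := by
  rw [Qa, ← sum_range_reflect]
  refine sum_congr rfl fun m hm => ?_
  have hm : m ≤ k := Nat.lt_succ_iff.mp (mem_range.mp hm)
  rw [Nat.add_sub_cancel, Nat.sub_sub_self hm, Nat.cast_sub hm]
  ring_nf

lemma sum_range_cast_add_one (n : ℕ) : ∑ m ∈ range n, ((m : ℝ) + 1) = n * (n + 1) / 2 := by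
  induction n with
  | zero => simp
  | succ n ih => rw [sum_range_succ, ih]; push_cast; ring

lemma sum_weighted_halfDbar_terms {M : Type*} [AddCommGroup M] [Module ℝ M] (k : ℕ)
    (U : ℕ → M) :
    ∑ m ∈ range (k + 1), ((m : ℝ) + 1) •
        ((m : ℝ) • U (m - 1) + ∑ i ∈ range m, U i - ∑ i ∈ range (k - m), U i) =
      ∑ i ∈ range k, (((k : ℝ) + 2) * ((i : ℝ) + 1)) • U i := by
  have hshift : ∑ m ∈ range (k + 1), ((m : ℝ) + 1) • ((m : ℝ) • U (m - 1)) =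
      ∑ i ∈ range k, (((i : ℝ) + 2) * ((i : ℝ) + 1)) • U i := by
    rw [sum_range_succ']
    refine (add_eq_left.mpr (by simp)).trans (sum_congr rfl fun i _ => ?_)
    rw [smul_smul, Nat.add_sub_cancel]
    push_cast; ring_nf
  have hlow : ∑ m ∈ range (k + 1), ((m : ℝ) + 1) • ∑ i ∈ range m, U i =
      ∑ i ∈ range k, (∑ m ∈ Ico (i + 1) (k + 1), ((m : ℝ) + 1)) • U i := by
    simp only [smul_sum, sum_smul]
    exact sum_comm' fun m i => by simp only [mem_range, mem_Ico]; omega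
  have hhigh : ∑ m ∈ range (k + 1), ((m : ℝ) + 1) • ∑ i ∈ range (k - m), U i =
      ∑ i ∈ range k, (∑ m ∈ range (k - i), ((m : ℝ) + 1)) • U i := by
    simp only [smul_sum, sum_smul]
    exact sum_comm' fun m i => by simp only [mem_range]; omega
  simp only [smul_add, smul_sub, sum_add_distrib, sum_sub_distrib]
  rw [hshift, hlow, hhigh, ← sum_add_distrib, ← sum_sub_distrib]
  refine sum_congr rfl fun i hi => ?_
  have hi : i < k := mem_range.mp hi
  rw [← add_smul, ← sub_smul, sum_Ico_eq_sub (fun m : ℕ => (m : ℝ) + 1) (by omega),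
    sum_range_cast_add_one, sum_range_cast_add_one, sum_range_cast_add_one, Nat.cast_sub hi.le]
  push_cast; ring_nf

lemma half_smul_Dbar_Qa (k : ℕ) (q : ℍ[ℝ]) :
    (1 / 2 : ℝ) • Dbar (Qa k) q = (2 / (((k : ℝ) + 1) * ((k : ℝ) + 2))) •
      ∑ i ∈ range k, (((k : ℝ) + 2) * ((i : ℝ) + 1)) • (q ^ i * star q ^ (k - 1 - i)) := by
  let U : ℕ → ℍ[ℝ] := fun i => q ^ i * star q ^ (k - 1 - i)
  have hterm : ∀ m ∈ range (k + 1), (1 / 2 : ℝ) • ((2 * ((m : ℝ) + 1) / (((k : ℝ) + 1) *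
      ((k : ℝ) + 2))) • Dbar (fun x => x ^ m * star x ^ (k - m)) q) =
      (2 / (((k : ℝ) + 1) * ((k : ℝ) + 2))) • (((m : ℝ) + 1) •
        ((m : ℝ) • U (m - 1) + ∑ i ∈ range m, U i - ∑ i ∈ range (k - m), U i)) := by
    intro m hm
    have hm : m ≤ k := Nat.lt_succ_iff.mp (mem_range.mp hm)
    have hU : (m : ℝ) • (q ^ (m - 1) * star q ^ (k - m)) = (m : ℝ) • U (m - 1) := by
      rcases Nat.eq_zero_or_pos m with rfl | hm0
      · simp
      · simp only [U]; congr 3; omega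
    rw [smul_comm, half_smul_Dbar_pow_mul_star_pow, Nat.add_sub_cancel' hm, hU, smul_smul]
    congr 1
    ring
  rw [show Qa k = _ from funext (Qa_eq_sum_pow_mul_star_pow k),
    Dbar_sum_smul _ _ _ q fun m _ => by fun_prop, smul_sum, sum_congr rfl hterm, ← smul_sum,
    sum_weighted_halfDbar_terms]

/-- Appell property: for every quaternion `q` and every `k ≥ 1`,
`(1/2)·D̄ Q_k(q,q̄) = k·Q_{k-1}(q,q̄)`. -/
theorem appell_property (k : ℕ) (hk : 1 ≤ k) (q : ℍ[ℝ]) :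
    (1/2 : ℝ) • Dbar (Qa k) q = (k : ℝ) • Qa (k-1) q := by
  rw [half_smul_Dbar_Qa, Qa_eq_sum_pow_mul_star_pow (k - 1), Nat.sub_add_cancel hk, smul_sum,
    smul_sum]
  refine sum_congr rfl fun i _ => ?_
  rw [smul_smul, smul_smul, Nat.cast_sub hk, Nat.cast_one, sub_add_cancel,
    show (k : ℝ) - 1 + 2 = k + 1 by ring]
  congr 1
  field_simp
end
end

section
/- Each quaternionic Appell polynomial Q_k(q,q̄) = Σ_{j=0}^k (2(k-j+1)/((k+1)(k+2))) q^{k-j} q̄^j is Fueter regular on ℍ, i.e. D Q_k = 0 where D = ∂_{x_0} + i∂_{x_1} + j∂_{x_2} + k∂_{x_3}. -/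
open Quaternion Real MeasureTheory

noncomputable section

/-!
By the product rule, the derivative of `q ^ m * star q ^ j` in a direction `v` is a sum of terms
`A * v * B` and `A * star v * B`. Feeding these into `D` only requires the two quaternion
identities `∑ e * A * e = -2 • star A` and `∑ e * A * star e = 2 • (A + star A)`, the sums running
over the basis `e ∈ {1, i, j, k}`. As `q` commutes with `star q`, `D (q ^ (k - j) * star q ^ j)`
is then a combination of the tail sums `T i = ∑_{i ≤ a < k} q ^ (k - 1 - a) * star q ^ a`, and
for the Appell weights `k - j + 1` the coefficient of every `T i` vanishes.
-/

open Finset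

instance inst_s4 : StarModule ℝ ℍ[ℝ] := ⟨fun r a => Quaternion.star_smul r a⟩

def fueterSum : (ℍ[ℝ] →L[ℝ] ℍ[ℝ]) →ₗ[ℝ] ℍ[ℝ] where
  toFun L := L 1 + qi * L qi + qj * L qj + qk * L qk
  map_add' L M := by simp only [add_apply]; noncomm_ring
  map_smul' c L := by simp only [smul_apply, RingHom.id_apply, smul_add, mul_smul_comm]

theorem Dop_eq_fueterSum (f : ℍ[ℝ] → ℍ[ℝ]) (q : ℍ[ℝ]) : Dop f q = fueterSum (fderiv ℝ f q) :=
  rfl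

theorem Dop_sum_smul {ι : Type*} (s : Finset ι) (c : ι → ℝ) (f : ι → ℍ[ℝ] → ℍ[ℝ]) (q : ℍ[ℝ])
    (hf : ∀ i ∈ s, DifferentiableAt ℝ (f i) q) :
    Dop (fun x => ∑ i ∈ s, c i • f i x) q = ∑ i ∈ s, c i • Dop (f i) q := by
  simp only [Dop_eq_fueterSum]
  rw [fderiv_fun_sum fun i hi => (hf i hi).fun_const_smul (c i), map_sum]
  exact sum_congr rfl fun i hi => by rw [fderiv_fun_const_smul (hf i hi), map_smul]

theorem sandwich_sum_eq_neg_two_smul_star (A : ℍ[ℝ]) :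
    A + qi * A * qi + qj * A * qj + qk * A * qk = (-2 : ℝ) • star A := by
  ext <;> simp [Quaternion.re_mul, Quaternion.imI_mul, Quaternion.imJ_mul,
    Quaternion.imK_mul] <;> simp [qi, qj, qk] <;> ring

theorem fueterSum_eq_of_apply_eq_mul_mul {L : ℍ[ℝ] →L[ℝ] ℍ[ℝ]} {A B : ℍ[ℝ]}
    (hL : ∀ v, L v = A * v * B) : fueterSum L = (-2 : ℝ) • (star A * B) := by
  calc fueterSum L = (A + qi * A * qi + qj * A * qj + qk * A * qk) * B := by
        simp only [fueterSum, LinearMap.coe_mk, AddHom.coe_mk, hL]; noncomm_ring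
    _ = _ := by rw [sandwich_sum_eq_neg_two_smul_star, smul_mul_assoc]

theorem fueterSum_eq_of_apply_eq_mul_star_mul {L : ℍ[ℝ] →L[ℝ] ℍ[ℝ]} {A B : ℍ[ℝ]}
    (hL : ∀ v, L v = A * star v * B) : fueterSum L = (2 : ℝ) • ((A + star A) * B) := by
  have hstar : star qi = -qi ∧ star qj = -qj ∧ star qk = -qk :=
    ⟨star_eq_neg.mpr rfl, star_eq_neg.mpr rfl, star_eq_neg.mpr rfl⟩
  calc fueterSum L = ((2 : ℝ) • A - (A + qi * A * qi + qj * A * qj + qk * A * qk)) * B := by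
        simp only [fueterSum, LinearMap.coe_mk, AddHom.coe_mk, hL, hstar, star_one, two_smul]
        noncomm_ring
    _ = _ := by
        rw [sandwich_sum_eq_neg_two_smul_star, ← smul_mul_assoc]
        congr 1; module

theorem Dop_pow_mul_star_pow (m j : ℕ) (q : ℍ[ℝ]) :
    Dop (fun x => x ^ m * star x ^ j) q =
      ∑ i ∈ range m, (-2 : ℝ) • (star (q ^ (m - 1 - i)) * (q ^ i * star q ^ j))
      + ∑ i ∈ range j, (2 : ℝ) • ((q ^ m * star q ^ (j - 1 - i)
          + star (q ^ m * star q ^ (j - 1 - i))) * star q ^ i) := by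
  have hD : HasFDerivAt (fun x : ℍ[ℝ] => x ^ m * star x ^ j) _ q :=
    (hasFDerivAt_pow' (𝕜 := ℝ) m).fun_mul' ((hasFDerivAt_id q).star.fun_pow' j)
  rw [Dop_eq_fueterSum, hD.fderiv, map_add, smul_sum, smul_sum, map_sum, map_sum, add_comm]
  congr 1
  · refine sum_congr rfl fun i _ => fueterSum_eq_of_apply_eq_mul_mul fun v => ?_
    simp [mul_assoc]
  · refine sum_congr rfl fun i _ => fueterSum_eq_of_apply_eq_mul_star_mul fun v => ?_
    simp [mul_assoc]

def tailSum (n i : ℕ) (q : ℍ[ℝ]) : ℍ[ℝ] := ∑ a ∈ Ico i n, q ^ (n - 1 - a) * star q ^ a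

theorem Dop_pow_mul_star_pow_eq_tailSum (m j : ℕ) (q : ℍ[ℝ]) :
    Dop (fun x => x ^ m * star x ^ j) q = (2 : ℝ) • (tailSum (m + j) m q - tailSum (m + j) j q
      + (j : ℝ) • (tailSum (m + j) (j - 1) q - tailSum (m + j) j q)) := by
  have hc : Commute (star q) q := star_comm_self' q
  have h1 : ∑ i ∈ range m, star (q ^ (m - 1 - i)) * (q ^ i * star q ^ j)
      = tailSum (m + j) j q := by
    rw [tailSum, sum_Ico_eq_sum_range, Nat.add_sub_cancel, ← sum_range_reflect]
    refine sum_congr rfl fun i hi => ?_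
    have hi := mem_range.mp hi
    rw [star_pow, ← mul_assoc, (hc.pow_pow _ _).eq, mul_assoc, ← pow_add]
    congr 2 <;> omega
  have h2 : ∑ i ∈ range j, q ^ m * star q ^ (j - 1 - i) * star q ^ i
      = (j : ℝ) • (q ^ m * star q ^ (j - 1)) := by
    calc _ = ∑ _i ∈ range j, q ^ m * star q ^ (j - 1) := sum_congr rfl fun i hi => by
            rw [mul_assoc, ← pow_add, Nat.sub_add_cancel (by have := mem_range.mp hi; omega)]
      _ = _ := by rw [sum_const, card_range, Nat.cast_smul_eq_nsmul]
  have h3 : ∑ i ∈ range j, star (q ^ m * star q ^ (j - 1 - i)) * star q ^ i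
      = tailSum (m + j) m q := by
    rw [tailSum, sum_Ico_eq_sum_range, Nat.add_sub_cancel_left]
    refine sum_congr rfl fun i hi => ?_
    have hi := mem_range.mp hi
    simp only [star_mul, star_pow, star_star]
    rw [mul_assoc, ← pow_add]
    congr 2; omega
  have h4 : (j : ℝ) • (q ^ m * star q ^ (j - 1))
      = (j : ℝ) • (tailSum (m + j) (j - 1) q - tailSum (m + j) j q) := by
    rcases Nat.eq_zero_or_pos j with rfl | hj
    · simp
    · rw [tailSum, tailSum, sum_eq_sum_Ico_succ_bot (by omega), Nat.sub_add_cancel hj,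
        add_sub_cancel_right]
      congr 3; omega
  rw [Dop_pow_mul_star_pow]
  simp only [← smul_sum, add_mul, sum_add_distrib, h1, h2, h3, h4]
  module

-- At `j = 0` the truncated `T (j - 1)` is harmless, its coefficient being `j`.
theorem sum_range_appell_weights_smul_eq_zero {R M : Type*} [CommRing R] [AddCommGroup M]
    [Module R M] (k : ℕ) (T : ℕ → M) :
    ∑ j ∈ range (k + 1), ((k : R) - j + 1) • (T (k - j) - T j + (j : R) • (T (j - 1) - T j))
      = 0 := by
  have reflect : ∑ j ∈ range (k + 1), ((k : R) - j + 1) • T (k - j)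
      = ∑ j ∈ range (k + 1), ((j : R) + 1) • T j := by
    rw [← sum_range_reflect]
    refine sum_congr rfl fun j hj => ?_
    have hj := mem_range.mp hj
    rw [Nat.add_sub_cancel, Nat.sub_sub_self (by omega), Nat.cast_sub (by omega)]
    congr 1; ring
  have shift : ∑ j ∈ range (k + 1), (((k : R) - j + 1) * j) • T (j - 1)
      = ∑ j ∈ range (k + 1), (((k : R) - j) * (j + 1)) • T j := by
    rw [sum_range_succ', sum_range_succ]
    simp only [Nat.cast_add, Nat.cast_one, add_tsub_cancel_right, Nat.cast_zero, mul_zero,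
      zero_smul, add_zero, sub_self, zero_mul]
    refine sum_congr rfl fun j _ => ?_
    congr 1; ring
  calc _ = ∑ j ∈ range (k + 1), (((j : R) + 1) - ((k : R) - j + 1)
          + (((k : R) - j) * (j + 1) - ((k : R) - j + 1) * j)) • T j := by
        simp only [smul_add, smul_sub, smul_smul, sum_add_distrib, sum_sub_distrib]
        rw [reflect, shift]
        simp only [add_smul, sub_smul, sum_add_distrib, sum_sub_distrib]
    _ = 0 := sum_eq_zero fun j _ => by ring_nf; exact zero_smul R (T j)

/-- Each quaternionic Appell polynomial `Q_k(q,q̄)` is Fueter regular on `ℍ`: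
`D Q_k = 0` everywhere, where `D` is the Cauchy–Fueter operator. -/
theorem appell_fueter_regular (k : ℕ) (q : ℍ[ℝ]) :
    Dop (Qa k) q = 0 := by
  unfold Qa
  rw [Dop_sum_smul _ _ _ _ fun j _ => by fun_prop]
  calc _ = ∑ j ∈ range (k + 1), (4 / (((k : ℝ) + 1) * ((k : ℝ) + 2))) •
        (((k : ℝ) - j + 1) • (tailSum k (k - j) q - tailSum k j q
          + (j : ℝ) • (tailSum k (j - 1) q - tailSum k j q))) := by
        refine sum_congr rfl fun j hj => ?_
        rw [Dop_pow_mul_star_pow_eq_tailSum, Nat.sub_add_cancel (by have := mem_range.mp hj; omega),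
          smul_smul, smul_smul]
        congr 1; ring
    _ = 0 := by
        rw [← smul_sum]
        exact smul_eq_zero_of_right _
          (sum_range_appell_weights_smul_eq_zero k fun i => tailSum k i q)
end
end
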